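/- Let m, n, k with n = m + k, let Y have density proportional to (1 + ‖y‖²)^(−(m+k)/2) on ℝ^k, and let a_n be an independent chi random variable with n degrees of freedom. Then the random variable b = a_n / √(1 + ‖Y‖²) is chi distributed with m degrees of freedom, i.e. has density proportional to b^(m−1) exp(−b²/2) on (0,∞). -/

import Mathlib

open MeasureTheory Real

/-- Measure on `ℝ` with density proportional to the chi density with `n` degrees of
freedom, `t^(n-1) exp(-t²/2)` on `(0,∞)`. -/
noncomputable def chiMeasure (n : ℕ) (c : ℝ) : Measure ℝ :=
  volume.withDensity fun t =>
    ENNReal.ofReal (c * if 0 < t then t ^ ((n : ℝ) - 1) * Real.exp (-t ^ 2 / 2) else 0)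

/-- Measure on `ℝ^k` with the multivariate Student-t density `∝ (1+‖y‖²)^(-(m+k)/2)`. -/
noncomputable def studentMeasure (m k : ℕ) (c : ℝ) : Measure (EuclideanSpace ℝ (Fin k)) :=
  volume.withDensity fun y =>
    ENNReal.ofReal (c * (1 + ‖y‖ ^ 2) ^ (-((m : ℝ) + k) / 2))

open scoped ENNReal

/-!
Given `Y = y`, put `s = √(1 + ‖y‖²)`. Then `aₙ / s` has density `s χₙ(t s)`, and
`s χₙ(t s) = sⁿ χₙ(t) exp(-t²‖y‖²/2)`. Averaging over the Student weight `s^{-(m+k)}` cancels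
`sⁿ`, and the remaining Gaussian integral over `ℝᵏ` equals `(2π)^{k/2} t^{-k}`, which turns
`χ_{m+k}(t)` into `(2π)^{k/2} χₘ(t)`.
-/

theorem MeasurableEquiv.map_withDensity {α β : Type*} [MeasurableSpace α] [MeasurableSpace β]
    (e : α ≃ᵐ β) (μ : Measure α) (f : α → ℝ≥0∞) :
    (μ.withDensity f).map e = (μ.map e).withDensity (f ∘ e.symm) := by
  ext s hs
  rw [e.map_apply, withDensity_apply _ (e.measurable hs), withDensity_apply _ hs,
    e.restrict_map, lintegral_map_equiv]
  simp

theorem Real.map_div_const_withDensity_volume (f : ℝ → ℝ≥0∞) {c : ℝ} (hc : 0 < c) :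
    (volume.withDensity f).map (· / c) =
      volume.withDensity fun t => ENNReal.ofReal c * f (t * c) := by
  have h := (MeasurableEquiv.mulRight₀ c⁻¹ (inv_ne_zero hc.ne')).map_withDensity volume f
  simp only [MeasurableEquiv.coe_mulRight₀, MeasurableEquiv.symm_mulRight₀, inv_inv,
    Real.map_volume_mul_right (inv_ne_zero hc.ne'), withDensity_smul_measure] at h
  simp only [div_eq_mul_inv, h, abs_of_pos hc, ← withDensity_smul' _ _ ENNReal.ofReal_ne_top]
  rfl

theorem map_div_prod_withDensity {E : Type*} [MeasurableSpace E] (ν : Measure E) [SFinite ν]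
    {f : ℝ → ℝ≥0∞} (hf : Measurable f) {s : E → ℝ} (hs : Measurable s) (hs_pos : ∀ y, 0 < s y) :
    ((volume.withDensity f).prod ν).map (fun p => p.1 / s p.2) =
      volume.withDensity fun t => ∫⁻ y, ENNReal.ofReal (s y) * f (t * s y) ∂ν := by
  have hφ : Measurable fun p : ℝ × E => p.1 / s p.2 := by fun_prop
  ext A hA
  have fiber (y : E) :
      volume.withDensity f ((fun x => (x, y)) ⁻¹' ((fun p => p.1 / s p.2) ⁻¹' A)) =
        ∫⁻ t in A, ENNReal.ofReal (s y) * f (t * s y) := by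
    rw [← withDensity_apply _ hA, ← Real.map_div_const_withDensity_volume f (hs_pos y),
      Measure.map_apply (by fun_prop) hA]
    rfl
  rw [Measure.map_apply hφ hA, Measure.prod_apply_symm (hφ hA), withDensity_apply _ hA,
    lintegral_congr fiber, lintegral_lintegral_swap (by fun_prop)]

theorem lintegral_exp_neg_mul_sq_norm {V : Type*} [NormedAddCommGroup V] [InnerProductSpace ℝ V]
    [FiniteDimensional ℝ V] [MeasurableSpace V] [BorelSpace V] {b : ℝ} (hb : 0 < b) :
    ∫⁻ v : V, ENNReal.ofReal (exp (-b * ‖v‖ ^ 2)) =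
      ENNReal.ofReal ((π / b) ^ (Module.finrank ℝ V / 2 : ℝ)) := by
  have hI : Integrable fun v : V => exp (-b * ‖v‖ ^ 2) :=
    .of_integral_ne_zero (by rw [GaussianFourier.integral_rexp_neg_mul_sq_norm hb]; positivity)
  rw [← ofReal_integral_eq_lintegral_ofReal hI (.of_forall fun v => (exp_pos _).le),
    GaussianFourier.integral_rexp_neg_mul_sq_norm hb]

noncomputable def chiDensity (n : ℕ) (t : ℝ) : ℝ :=
  if 0 < t then t ^ ((n : ℝ) - 1) * exp (-t ^ 2 / 2) else 0

theorem chiMeasure_eq_withDensity (n : ℕ) (c : ℝ) :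
    chiMeasure n c = volume.withDensity fun t => ENNReal.ofReal (c * chiDensity n t) :=
  rfl

instance (m k : ℕ) (c : ℝ) : SFinite (studentMeasure m k c) :=
  Measure.withDensity.instSFinite

theorem chiDensity_nonneg (n : ℕ) (t : ℝ) : 0 ≤ chiDensity n t := by
  unfold chiDensity
  split_ifs <;> positivity

@[fun_prop]
theorem measurable_chiDensity (n : ℕ) : Measurable (chiDensity n) :=
  Measurable.ite measurableSet_Ioi (by fun_prop) measurable_const

theorem chiDensity_add (m k : ℕ) (t : ℝ) : chiDensity (m + k) t = t ^ k * chiDensity m t := by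
  unfold chiDensity
  split_ifs with ht
  · rw [← mul_assoc, ← rpow_natCast t k, ← rpow_add ht]
    congr 2
    push_cast
    ring
  · rw [mul_zero]

theorem mul_chiDensity_mul {s : ℝ} (hs : 0 < s) (n : ℕ) (t : ℝ) :
    s * chiDensity n (t * s) = s ^ n * chiDensity n t * exp (-(t ^ 2 / 2) * (s ^ 2 - 1)) := by
  unfold chiDensity
  by_cases ht : 0 < t
  · have hpow : (t * s) ^ ((n : ℝ) - 1) = t ^ ((n : ℝ) - 1) * (s ^ n / s) := by
      rw [mul_rpow ht.le hs.le, rpow_sub_one hs.ne', rpow_natCast]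
    have hexp :
        exp (-(t * s) ^ 2 / 2) = exp (-t ^ 2 / 2) * exp (-(t ^ 2 / 2) * (s ^ 2 - 1)) := by
      rw [← exp_add]
      ring_nf
    rw [if_pos (mul_pos ht hs), if_pos ht, hpow, hexp]
    field_simp
  · rw [if_neg ht, if_neg (by nlinarith), mul_zero, mul_zero, zero_mul]

theorem rpow_neg_mul_sqrt_mul_chiDensity (m k : ℕ) (r t : ℝ) :
    (1 + r ^ 2) ^ (-((m : ℝ) + k) / 2) *
        (√(1 + r ^ 2) * chiDensity (m + k) (t * √(1 + r ^ 2))) =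
      chiDensity (m + k) t * exp (-(t ^ 2 / 2) * r ^ 2) := by
  have hu : 0 < 1 + r ^ 2 := by positivity
  have hpow : √(1 + r ^ 2) ^ (m + k) = (1 + r ^ 2) ^ (((m : ℝ) + k) / 2) := by
    rw [sqrt_eq_rpow, ← rpow_natCast, ← rpow_mul hu.le]
    congr 1
    push_cast
    ring
  rw [mul_chiDensity_mul (sqrt_pos.2 hu), sq_sqrt hu.le, hpow, add_sub_cancel_left, neg_div,
    rpow_neg hu.le, ← mul_assoc, ← mul_assoc, inv_mul_cancel₀ (rpow_pos_of_pos hu _).ne',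
    one_mul]

theorem lintegral_chiDensity_mul_exp_neg_mul_sq_norm (m k : ℕ) (t : ℝ) :
    ∫⁻ y : EuclideanSpace ℝ (Fin k),
        ENNReal.ofReal (chiDensity (m + k) t * exp (-(t ^ 2 / 2) * ‖y‖ ^ 2)) =
      ENNReal.ofReal ((2 * π) ^ ((k : ℝ) / 2) * chiDensity m t) := by
  rcases le_or_gt t 0 with ht | ht
  · simp [chiDensity, not_lt.2 ht]
  have hgauss : t ^ k * (π / (t ^ 2 / 2)) ^ ((k : ℝ) / 2) = (2 * π) ^ ((k : ℝ) / 2) := by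
    rw [show π / (t ^ 2 / 2) = 2 * π / t ^ 2 by field_simp,
      div_rpow (by positivity) (by positivity), ← rpow_natCast t 2, ← rpow_mul ht.le,
      ← rpow_natCast, show ((2 : ℕ) : ℝ) * ((k : ℝ) / 2) = k by push_cast; ring]
    field_simp
  simp_rw [ENNReal.ofReal_mul (chiDensity_nonneg _ _)]
  rw [lintegral_const_mul' _ _ ENNReal.ofReal_ne_top,
    lintegral_exp_neg_mul_sq_norm (by positivity), finrank_euclideanSpace_fin,
    ← ENNReal.ofReal_mul (chiDensity_nonneg _ _), chiDensity_add, ← hgauss]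
  congr 1
  ring

theorem scale_factor_is_chi_general (m n k : ℕ) (hn : n = m + k) (ca cY : ℝ)
    (hca : 0 < ca) (hcY : 0 < cY) :
    ∃ c' : ℝ, 0 < c' ∧
      ((chiMeasure n ca).prod (studentMeasure m k cY)).map
          (fun p : ℝ × EuclideanSpace ℝ (Fin k) => p.1 / Real.sqrt (1 + ‖p.2‖ ^ 2)) =
        chiMeasure m c' := by
  subst hn
  refine ⟨ca * cY * (2 * π) ^ ((k : ℝ) / 2), by positivity, ?_⟩
  rw [chiMeasure_eq_withDensity, chiMeasure_eq_withDensity,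
    map_div_prod_withDensity _ (by fun_prop) (s := fun y => √(1 + ‖y‖ ^ 2)) (by fun_prop)
      fun y => sqrt_pos.2 (by positivity)]
  congr 1
  funext t
  rw [studentMeasure, lintegral_withDensity_eq_lintegral_mul _ (by fun_prop) (by fun_prop)]
  calc _ = ∫⁻ y : EuclideanSpace ℝ (Fin k), ENNReal.ofReal (ca * cY) *
          ENNReal.ofReal (chiDensity (m + k) t * exp (-(t ^ 2 / 2) * ‖y‖ ^ 2)) := by
        refine lintegral_congr fun y => ?_
        have := chiDensity_nonneg (m + k) (t * √(1 + ‖y‖ ^ 2))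
        simp only [Pi.mul_apply]
        rw [← ENNReal.ofReal_mul (by positivity), ← ENNReal.ofReal_mul (by positivity),
          ← ENNReal.ofReal_mul (by positivity), ← rpow_neg_mul_sqrt_mul_chiDensity]
        congr 1
        ring
    _ = ENNReal.ofReal (ca * cY * (2 * π) ^ ((k : ℝ) / 2) * chiDensity m t) := by
        rw [lintegral_const_mul' _ _ ENNReal.ofReal_ne_top,
          lintegral_chiDensity_mul_exp_neg_mul_sq_norm, ← ENNReal.ofReal_mul (by positivity)]
        congr 1
        ring

/-- Second claim of Theorem 2: `b = aₙ/√(1+‖Y‖²)` is chi distributed with `m` degrees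
of freedom. -/
theorem scale_factor_is_chi (m n k : ℕ) (hn : n = m + k) (ca cY : ℝ)
    (hca : 0 < ca) (hcY : 0 < cY)
    (ha : IsProbabilityMeasure (chiMeasure n ca))
    (hY : IsProbabilityMeasure (studentMeasure m k cY)) :
    ∃ c' : ℝ, 0 < c' ∧
      ((chiMeasure n ca).prod (studentMeasure m k cY)).map
          (fun p : ℝ × EuclideanSpace ℝ (Fin k) => p.1 / Real.sqrt (1 + ‖p.2‖ ^ 2)) =
        chiMeasure m c' :=
  scale_factor_is_chi_general m n k hn ca cY hca hcY
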